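/- Let G be a finite group acting distributively on an additive commutative monoid V, Lift x = (fun _ => x), Drop X = ∑_{g ∈ G} X g, and let f : (G → V) → (G → V) be any function satisfying f (T_s X) = T_s (f X) for all s ∈ G (T-equivariance), where (T_s X) g = s • X (g * s). Then the composite N = Drop ∘ f ∘ Lift is G-equivariant: N (s • x) = s • N x for all s ∈ G and x ∈ V. -/
import Mathlib

theorem fgnn_equivariant (G : Type*) [Group G] [Fintype G]
    (V : Type*) [AddCommMonoid V] [DistribMulAction G V]
    (T : G → (G → V) → (G → V)) (hT : ∀ s X g, T s X g = s • X (g * s))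
    (Lift : V → (G → V)) (hLift : ∀ x g, Lift x g = x)
    (Drop : (G → V) → V) (hDrop : ∀ X, Drop X = ∑ g : G, X g)
    (f : (G → V) → (G → V)) (hf : ∀ (s : G) (X : G → V), f (T s X) = T s (f X)) :
    ∀ (s : G) (x : V), (Drop ∘ f ∘ Lift) (s • x) = s • (Drop ∘ f ∘ Lift) x := by
  intro s x
  have hL : Lift (s • x) = T s (Lift x) := by
    funext g; rw [hT, hLift, hLift]
  simp only [Function.comp, hL, hf, hDrop]
  simp only [hT, ← Finset.smul_sum]
  congr 1
  exact (Fintype.sum_equiv (Equiv.mulRight s) _ _ (fun g => rfl))
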